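/- Let (G, H) be a pair of dual locally compact abelian groups and ν a good measure sequence on H (i.e. c_ν(g) := lim_{N→∞} ∫_H ⟨g,h⟩ dν_N(h) exists for all g ∈ G). Then the set Γ_ν := { g ∈ G : |c_ν(g)| = 1 } is a subgroup of G, and the restriction of c_ν to Γ_ν is a group homomorphism Γ_ν → 𝕋. -/

import Mathlib

/-!
For a unimodular function `f` and a probability measure `μ` one has
`∫ ‖f - c‖² dμ = 2 - 2 Re((∫ f dμ) c̄)` whenever `|c| = 1`. Hence if `∫ f dμ_N → c` with `|c| = 1`,
then `f → c` in `L²(μ_N)`. For two such functions `f → c`, `g → d`, the only term of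
`∫ f g - c d = ∫ (f - c)(g - d) + c (∫ g - d) + d (∫ f - c)` not controlled by the hypotheses is
the first, and it is bounded by `∫ ‖f - c‖² + ∫ ‖g - d‖² → 0`. Applied to the characters
`h ↦ ⟨g, h⟩` this makes `c_ν` multiplicative on `Γ_ν`, which is then closed under products;
it is closed under inverses because `c_ν(g⁻¹) = conj (c_ν g)`.
-/

open MeasureTheory Filter Topology ComplexConjugate

lemma Complex.norm_sub_sq_of_norm_eq_one {a c : ℂ} (ha : ‖a‖ = 1) (hc : ‖c‖ = 1) :
    ‖a - c‖ ^ 2 = 2 - 2 * (a * conj c).re := by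
  rw [Complex.sq_norm, Complex.normSq_sub, ← Complex.sq_norm, ← Complex.sq_norm, ha, hc]
  norm_num

section UnimodularIntegrals

variable {α : Type*} [MeasurableSpace α] {f g : α → ℂ} {c d : ℂ}

lemma integrable_of_norm_eq_one {μ : Measure α} [IsFiniteMeasure μ] (hf : Measurable f)
    (hf1 : ∀ x, ‖f x‖ = 1) : Integrable f μ :=
  Integrable.of_bound hf.aestronglyMeasurable 1 (ae_of_all _ fun x => (hf1 x).le)

lemma integrable_norm_sub_sq_of_norm_eq_one {μ : Measure α} [IsFiniteMeasure μ]
    (hf : Measurable f) (hf1 : ∀ x, ‖f x‖ = 1) (hc : ‖c‖ = 1) :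
    Integrable (fun x => ‖f x - c‖ ^ 2) μ := by
  refine Integrable.of_bound ((hf.sub_const c).norm.pow_const 2).aestronglyMeasurable 4
    (ae_of_all _ fun x => ?_)
  have : ‖f x - c‖ ≤ 2 := (norm_sub_le _ _).trans (by rw [hf1, hc]; norm_num)
  rw [Real.norm_of_nonneg (by positivity)]
  nlinarith [norm_nonneg (f x - c)]

lemma integral_norm_sub_sq_of_norm_eq_one {μ : Measure α} [IsProbabilityMeasure μ]
    (hf : Measurable f) (hf1 : ∀ x, ‖f x‖ = 1) (hc : ‖c‖ = 1) :
    ∫ x, ‖f x - c‖ ^ 2 ∂μ = 2 - 2 * ((∫ x, f x ∂μ) * conj c).re := by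
  have hint : Integrable (fun x => f x * conj c) μ :=
    integrable_of_norm_eq_one (hf.mul_const _) fun x => by simp [hf1, hc]
  have hre_int : Integrable (fun x => (f x * conj c).re) μ := hint.re
  have hre : ∫ x, (f x * conj c).re ∂μ = ((∫ x, f x ∂μ) * conj c).re := by
    rw [← integral_mul_const]
    exact integral_re hint
  simp_rw [Complex.norm_sub_sq_of_norm_eq_one (hf1 _) hc]
  rw [integral_sub (integrable_const _) (hre_int.const_mul 2), integral_const_mul, hre,
    integral_const]
  simp

variable {ι : Type*} {l : Filter ι} {μ : ι → Measure α} [∀ i, IsProbabilityMeasure (μ i)]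

lemma tendsto_integral_norm_sub_sq_of_norm_eq_one (hf : Measurable f) (hf1 : ∀ x, ‖f x‖ = 1)
    (hc : ‖c‖ = 1) (hlim : Tendsto (fun i => ∫ x, f x ∂μ i) l (𝓝 c)) :
    Tendsto (fun i => ∫ x, ‖f x - c‖ ^ 2 ∂μ i) l (𝓝 0) := by
  simp_rw [integral_norm_sub_sq_of_norm_eq_one hf hf1 hc]
  have hzero : (2 : ℝ) - 2 * (c * conj c).re = 0 := by
    rw [Complex.mul_conj, ← Complex.sq_norm, hc]; norm_num
  rw [← hzero]
  exact tendsto_const_nhds.sub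
    (((Complex.continuous_re.tendsto _).comp (hlim.mul_const _)).const_mul 2)

lemma tendsto_integral_sub_mul_sub_of_norm_eq_one
    (hf : Measurable f) (hf1 : ∀ x, ‖f x‖ = 1) (hg : Measurable g) (hg1 : ∀ x, ‖g x‖ = 1)
    (hc : ‖c‖ = 1) (hd : ‖d‖ = 1) (hflim : Tendsto (fun i => ∫ x, f x ∂μ i) l (𝓝 c))
    (hglim : Tendsto (fun i => ∫ x, g x ∂μ i) l (𝓝 d)) :
    Tendsto (fun i => ∫ x, (f x - c) * (g x - d) ∂μ i) l (𝓝 0) := by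
  refine squeeze_zero_norm (fun i => ?_) (by
    simpa using (tendsto_integral_norm_sub_sq_of_norm_eq_one hf hf1 hc hflim).add
      (tendsto_integral_norm_sub_sq_of_norm_eq_one hg hg1 hd hglim))
  have hfc := integrable_norm_sub_sq_of_norm_eq_one (μ := μ i) hf hf1 hc
  have hgd := integrable_norm_sub_sq_of_norm_eq_one (μ := μ i) hg hg1 hd
  rw [← integral_add hfc hgd]
  refine norm_integral_le_of_norm_le (hfc.add hgd) (ae_of_all _ fun x => ?_)
  rw [norm_mul]
  nlinarith [sq_nonneg (‖f x - c‖ - ‖g x - d‖)]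

lemma tendsto_integral_mul_of_norm_eq_one
    (hf : Measurable f) (hf1 : ∀ x, ‖f x‖ = 1) (hg : Measurable g) (hg1 : ∀ x, ‖g x‖ = 1)
    (hc : ‖c‖ = 1) (hd : ‖d‖ = 1) (hflim : Tendsto (fun i => ∫ x, f x ∂μ i) l (𝓝 c))
    (hglim : Tendsto (fun i => ∫ x, g x ∂μ i) l (𝓝 d)) :
    Tendsto (fun i => ∫ x, f x * g x ∂μ i) l (𝓝 (c * d)) := by
  have hexpand : ∀ i, ∫ x, f x * g x ∂μ i =
      ∫ x, (f x - c) * (g x - d) ∂μ i + c * ∫ x, g x ∂μ i + d * ∫ x, f x ∂μ i - c * d := by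
    intro i
    have hfg : Integrable (fun x => f x * g x) (μ i) :=
      integrable_of_norm_eq_one (hf.mul hg) fun x => by rw [norm_mul, hf1, hg1, one_mul]
    have hcross : (fun x => (f x - c) * (g x - d)) =
        fun x => f x * g x - c * g x - d * f x + c * d := by
      ext x; ring
    have hcg := (integrable_of_norm_eq_one (μ := μ i) hg hg1).const_mul c
    have hdf := (integrable_of_norm_eq_one (μ := μ i) hf hf1).const_mul d
    have hfgc : Integrable (fun x => f x * g x - c * g x) (μ i) := hfg.sub hcg
    have hfgcd : Integrable (fun x => f x * g x - c * g x - d * f x) (μ i) := hfgc.sub hdf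
    rw [hcross, integral_add hfgcd (integrable_const _), integral_sub hfgc hdf,
      integral_sub hfg hcg, integral_const_mul,
      integral_const_mul, integral_const, probReal_univ, one_smul]
    ring
  simp_rw [hexpand]
  convert (((tendsto_integral_sub_mul_sub_of_norm_eq_one hf hf1 hg hg1 hc hd hflim
    hglim).add (hglim.const_mul c)).add (hflim.const_mul d)).sub_const (c * d) using 2
  ring

end UnimodularIntegrals

theorem gamma_nu_subgroup_general
    {G : Type*} [CommGroup G] [TopologicalSpace G]
    [MeasurableSpace (PontryaginDual G)] [BorelSpace (PontryaginDual G)]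
    (ν : ℕ → Measure (PontryaginDual G)) (hν : ∀ N, IsProbabilityMeasure (ν N))
    (c : G → ℂ)
    (hgood : ∀ g : G, Tendsto (fun N => ∫ h, ((h g : ℂ)) ∂ν N) atTop (𝓝 (c g))) :
    ∃ Γ : Subgroup G, (Γ : Set G) = {g : G | ‖c g‖ = 1} ∧
      ∀ g ∈ Γ, ∀ g' ∈ Γ, c (g * g') = c g * c g' := by
  have hχ : ∀ g : G, Measurable fun h : PontryaginDual G => (h g : ℂ) := fun g =>
    Continuous.measurable (α := PontryaginDual G)
      (continuous_subtype_val.comp (continuous_eval_const (F := G →ₜ* Circle) g))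
  have hχ1 : ∀ (g : G) (h : PontryaginDual G), ‖(h g : ℂ)‖ = 1 := fun _ _ => Circle.norm_coe _
  have c_one : c 1 = 1 := tendsto_nhds_unique (hgood 1) (by simp)
  have c_inv : ∀ g, c g⁻¹ = conj (c g) := fun g => tendsto_nhds_unique (hgood g⁻¹) (by
    simpa only [map_inv, Circle.coe_inv_eq_conj, integral_conj, Function.comp_def] using
      (Complex.continuous_conj.tendsto _).comp (hgood g))
  have c_mul : ∀ g g', ‖c g‖ = 1 → ‖c g'‖ = 1 → c (g * g') = c g * c g' :=
    fun g g' hg hg' => tendsto_nhds_unique (hgood (g * g')) (by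
      simpa using tendsto_integral_mul_of_norm_eq_one (hχ g) (hχ1 g) (hχ g') (hχ1 g') hg hg'
        (hgood g) (hgood g'))
  refine ⟨{ carrier := {g | ‖c g‖ = 1}
            one_mem' := by simp [c_one]
            mul_mem' := fun {g g'} hg hg' => ?_
            inv_mem' := fun {g} hg => ?_ }, rfl, fun g hg g' hg' => c_mul g g' hg hg'⟩
  · simp only [Set.mem_ofPred_eq] at hg hg' ⊢
    rw [c_mul g g' hg hg', norm_mul, hg, hg', mul_one]
  · simp only [Set.mem_ofPred_eq] at hg ⊢
    rw [c_inv, RCLike.norm_conj, hg]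

/-- For a good measure sequence `ν` on `H = Ĝ` with limit function `c = c_ν`, the set
`Γ_ν = {g : |c_ν(g)| = 1}` is a subgroup of `G` and `c_ν` restricted to it is a group
homomorphism into the unit circle (multiplicativity; its values have modulus one). -/
theorem gamma_nu_subgroup
    {G : Type*} [CommGroup G] [TopologicalSpace G] [IsTopologicalGroup G]
    [LocallyCompactSpace G]
    [MeasurableSpace (PontryaginDual G)] [BorelSpace (PontryaginDual G)]
    (ν : ℕ → Measure (PontryaginDual G)) (hν : ∀ N, IsProbabilityMeasure (ν N))
    (c : G → ℂ)
    (hgood : ∀ g : G, Tendsto (fun N => ∫ h, ((h g : ℂ)) ∂ν N) atTop (𝓝 (c g))) :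
    ∃ Γ : Subgroup G, (Γ : Set G) = {g : G | ‖c g‖ = 1} ∧
      ∀ g ∈ Γ, ∀ g' ∈ Γ, c (g * g') = c g * c g' :=
  gamma_nu_subgroup_general ν hν c hgood
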